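/- Let Λ_{2^k} = {λ : λ^{2^k} = 1}, (a_k)_{k≥0} nonnegative with Σ a_k = 1, ρ_k = 2^{-k} Σ_{λ ∈ Λ_{2^{k+1}} \ Λ_{2^k}} δ_λ, and ρ = Σ_{k≥0} a_k ρ_k. Then Σ_{k≥n+1} a_k ≤ e_{2^n}(ρ)² ≤ 4 Σ_{k≥n} a_k for every n. -/

import Mathlib

/-!
The nodes of `ρ_k` are the `2^k` roots of `z^{2^k} = -1`, and the power sums `∑_j λ_j^m` over
them vanish unless `2^k ∣ m`. Pairing a monic `q` of degree `d < 2^k` with `z^{2^{k+1}-d}` therefore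
picks out its leading coefficient, so `∑_j |q(λ_j)| ≥ 2^k`, and Cauchy–Schwarz gives
`∫ |q|² dρ_k ≥ 1` whenever `k > n`. Conversely `q = z^{2^n} - 1` vanishes on the support of
`ρ_k` for `k < n` and is bounded by `2` on the unit circle.
-/

open MeasureTheory Complex Polynomial

/-- The squared Szegő minimum `e_n(ρ)²`. -/
noncomputable def szegoE2 (ρ : Measure ℂ) (n : ℕ) : ℝ :=
  sInf { x | ∃ q : Polynomial ℂ, q.Monic ∧ q.natDegree = n ∧
    x = ∫ z, ‖q.eval z‖ ^ 2 ∂ρ }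

/-- `ρ_k = 2^{-k} Σ_{λ ∈ Λ_{2^{k+1}} \ Λ_{2^k}} δ_λ`; the elements of
`Λ_{2^{k+1}} \ Λ_{2^k}` are `exp(2πi(2j+1)/2^{k+1})`, `0 ≤ j < 2^k`. -/
noncomputable def rhoDyadic (k : ℕ) : Measure ℂ :=
  ((2 : ENNReal) ^ k)⁻¹ • Measure.sum (fun j : Fin (2 ^ k) =>
    Measure.dirac (Complex.exp (2 * Real.pi * Complex.I *
      (2 * (j : ℕ) + 1) / (2 ^ (k + 1) : ℕ))))

section SumOfMeasures

variable {α : Type*} [MeasurableSpace α] {μ : ℕ → Measure α} [∀ k, IsProbabilityMeasure (μ k)]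
  {a : ℕ → ℝ}

lemma isFiniteMeasure_sum_ofReal_smul (ha : ∀ k, 0 ≤ a k) (hs : Summable a) :
    IsFiniteMeasure (Measure.sum fun k => ENNReal.ofReal (a k) • μ k) where
  measure_univ_lt_top := by
    simp only [Measure.sum_apply _ MeasurableSet.univ, Measure.smul_apply, measure_univ,
      smul_eq_mul, mul_one, ← ENNReal.ofReal_tsum_of_nonneg ha hs, ENNReal.ofReal_lt_top]

lemma hasSum_integral_sum_ofReal_smul {E : Type*} [NormedAddCommGroup E] [NormedSpace ℝ E]
    (ha : ∀ k, 0 ≤ a k) (hs : Summable a) {f : α → E} (hf : StronglyMeasurable f) (C : ℝ)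
    (hC : ∀ k, ∀ᵐ x ∂μ k, ‖f x‖ ≤ C) :
    HasSum (fun k => a k • ∫ x, f x ∂μ k)
      (∫ x, f x ∂Measure.sum fun k => ENNReal.ofReal (a k) • μ k) := by
  have hfin := isFiniteMeasure_sum_ofReal_smul (μ := μ) ha hs
  have hint : Integrable f (Measure.sum fun k => ENNReal.ofReal (a k) • μ k) :=
    .of_bound hf.aestronglyMeasurable C <|
      Measure.ae_sum_iff.2 fun k => Measure.ae_smul_measure (hC k) _
  simpa only [integral_smul_measure, ENNReal.toReal_ofReal (ha _)] using
    hasSum_integral_measure hint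

end SumOfMeasures

lemma tsum_nat_add_le_tsum_mul {a b : ℕ → ℝ} (ha : ∀ k, 0 ≤ a k) (hb : ∀ k, 0 ≤ b k)
    (hab : Summable fun k => a k * b k) (m : ℕ) (hb1 : ∀ k, m ≤ k → 1 ≤ b k) :
    ∑' k, a (m + k) ≤ ∑' k, a k * b k := by
  have hab' : Summable fun k => a (m + k) * b (m + k) := by
    simpa only [add_comm m] using (summable_nat_add_iff m).2 hab
  have hle : ∀ k, a (m + k) ≤ a (m + k) * b (m + k) := fun k =>
    le_mul_of_one_le_right (ha _) (hb1 _ (Nat.le_add_right m k))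
  calc ∑' k, a (m + k) ≤ ∑' k, a (m + k) * b (m + k) :=
        (hab'.of_nonneg_of_le (fun k => ha _) hle).tsum_le_tsum hle hab'
    _ ≤ ∑ k ∈ Finset.range m, a k * b k + ∑' k, a (k + m) * b (k + m) := by
        simp only [add_comm _ m]
        exact le_add_of_nonneg_left (Finset.sum_nonneg fun k _ => mul_nonneg (ha k) (hb k))
    _ = ∑' k, a k * b k := hab.sum_add_tsum_nat_add m

lemma tsum_mul_le_mul_tsum_nat_add {a b : ℕ → ℝ} (ha : ∀ k, 0 ≤ a k) (hs : Summable a)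
    (hab : Summable fun k => a k * b k) (m : ℕ) (hb0 : ∀ k < m, b k = 0) {C : ℝ}
    (hbC : ∀ k, b k ≤ C) :
    ∑' k, a k * b k ≤ C * ∑' k, a (m + k) := by
  rw [← hab.sum_add_tsum_nat_add m, Finset.sum_eq_zero fun k hk => by
    rw [hb0 k (Finset.mem_range.1 hk), mul_zero], zero_add, ← tsum_mul_left]
  simp only [add_comm _ m]
  refine Summable.tsum_le_tsum (fun k => ?_) ?_ ?_
  · rw [mul_comm C]; exact mul_le_mul_of_nonneg_left (hbC _) (ha _)
  · simpa only [add_comm m] using (summable_nat_add_iff m).2 hab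
  · simpa only [add_comm m] using ((summable_nat_add_iff m).2 hs).mul_left C

lemma card_le_sum_norm_sq {𝕜 ι : Type*} [RCLike 𝕜] [Fintype ι] {u g : ι → 𝕜}
    (hu : ∀ i, ‖u i‖ = 1) (h : ∑ i, u i * g i = Fintype.card ι) :
    (Fintype.card ι : ℝ) ≤ ∑ i, ‖g i‖ ^ 2 := by
  have hN : (Fintype.card ι : ℝ) ≤ ∑ i, ‖g i‖ := calc
    (Fintype.card ι : ℝ) = ‖∑ i, u i * g i‖ := by rw [h, RCLike.norm_natCast]
    _ ≤ ∑ i, ‖g i‖ := (norm_sum_le _ _).trans_eq <| by simp only [norm_mul, hu, one_mul]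
  have hCS : (∑ i, ‖g i‖) ^ 2 ≤ Fintype.card ι * ∑ i, ‖g i‖ ^ 2 := sq_sum_le_card_mul_sum_sq
  rcases (Nat.cast_nonneg (α := ℝ) (Fintype.card ι)).eq_or_lt with h0 | hpos
  · rw [← h0]; positivity
  · refine le_of_mul_le_mul_left ?_ hpos
    nlinarith [pow_le_pow_left₀ hpos.le hN 2]

lemma IsPrimitiveRoot.sum_pow_odd_pow_eq_zero {R : Type*} [CommRing R] [IsDomain R] {ζ : R}
    {k m : ℕ} (hζ : IsPrimitiveRoot ζ (2 ^ (k + 1))) (hm : ¬ 2 ^ k ∣ m) :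
    ∑ j ∈ Finset.range (2 ^ k), (ζ ^ (2 * j + 1)) ^ m = 0 := by
  have hζ2 : IsPrimitiveRoot (ζ ^ 2) (2 ^ k) := by
    have := hζ.pow_of_dvd two_ne_zero (dvd_pow_self 2 k.succ_ne_zero)
    rwa [pow_succ 2 k, Nat.mul_div_cancel _ two_pos] at this
  have hne : (ζ ^ 2) ^ m ≠ 1 := by rwa [Ne, hζ2.pow_eq_one_iff_dvd]
  have hgeom := geom_sum_mul ((ζ ^ 2) ^ m) (2 ^ k)
  rw [pow_right_comm (ζ ^ 2) m, hζ2.pow_eq_one, one_pow, sub_self] at hgeom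
  calc ∑ j ∈ Finset.range (2 ^ k), (ζ ^ (2 * j + 1)) ^ m
      = ζ ^ m * ∑ j ∈ Finset.range (2 ^ k), ((ζ ^ 2) ^ m) ^ j := by
        rw [Finset.mul_sum]
        refine Finset.sum_congr rfl fun j _ => ?_
        rw [← pow_mul, ← pow_mul, ← pow_mul, ← pow_add]
        ring_nf
    _ = 0 := by rw [(mul_eq_zero.1 hgeom).resolve_right (sub_ne_zero.2 hne), mul_zero]

section Dyadic

variable {k : ℕ}

noncomputable def dyadicNode (k j : ℕ) : ℂ :=
  exp (2 * Real.pi * I / (2 ^ (k + 1) : ℕ)) ^ (2 * j + 1)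

lemma isPrimitiveRoot_exp_two_pow_succ (k : ℕ) :
    IsPrimitiveRoot (exp (2 * Real.pi * I / (2 ^ (k + 1) : ℕ))) (2 ^ (k + 1)) :=
  isPrimitiveRoot_exp _ (by positivity)

lemma rhoDyadic_eq_sum_dirac (k : ℕ) :
    rhoDyadic k = ((2 : ENNReal) ^ k)⁻¹ •
      Measure.sum fun j : Fin (2 ^ k) => Measure.dirac (dyadicNode k j) := by
  simp only [rhoDyadic, dyadicNode, ← exp_nat_mul]
  congr! 5
  push_cast
  ring

lemma dyadicNode_pow_two_pow {n : ℕ} (hkn : k < n) (j : ℕ) : dyadicNode k j ^ 2 ^ n = 1 := by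
  rw [dyadicNode, pow_right_comm,
    (isPrimitiveRoot_exp_two_pow_succ k).pow_eq_one_iff_dvd _ |>.2 (pow_dvd_pow 2 hkn), one_pow]

lemma norm_dyadicNode (k j : ℕ) : ‖dyadicNode k j‖ = 1 :=
  norm_eq_one_of_pow_eq_one (dyadicNode_pow_two_pow k.lt_succ_self j) (by positivity)

lemma sum_dyadicNode_pow_eq_zero {m : ℕ} (hm : ¬ 2 ^ k ∣ m) :
    ∑ j : Fin (2 ^ k), dyadicNode k j ^ m = 0 := by
  rw [Fin.sum_univ_eq_sum_range (fun j => dyadicNode k j ^ m)]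
  exact (isPrimitiveRoot_exp_two_pow_succ k).sum_pow_odd_pow_eq_zero hm

/-- Multiplying by `z^{2^{k+1} - d}` shifts the powers of `z` in `q` into `(2^k, 2^{k+1}]`, where
only the top one survives summation over the nodes. -/
lemma sum_dyadicNode_pow_mul_eval {q : ℂ[X]} (hq : q.Monic) (hd : q.natDegree < 2 ^ k) :
    ∑ j : Fin (2 ^ k), dyadicNode k j ^ (2 ^ (k + 1) - q.natDegree) * q.eval (dyadicNode k j)
      = 2 ^ k := by
  have hdN : q.natDegree ≤ 2 ^ (k + 1) := (hd.trans (Nat.pow_lt_pow_succ one_lt_two)).le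
  simp only [eval_eq_sum_range, Finset.mul_sum, mul_left_comm _ (q.coeff _), ← pow_add]
  rw [Finset.sum_comm]
  simp only [← Finset.mul_sum]
  rw [Finset.sum_eq_single q.natDegree]
  · simp [hq.coeff_natDegree, Nat.sub_add_cancel hdN, dyadicNode_pow_two_pow k.lt_succ_self]
  · intro i hmem hid
    have hi : i < q.natDegree := lt_of_le_of_ne (Nat.lt_succ_iff.1 (Finset.mem_range.1 hmem)) hid
    rw [sum_dyadicNode_pow_eq_zero, mul_zero]
    rw [show 2 ^ (k + 1) - q.natDegree + i = 2 ^ k + (2 ^ k - q.natDegree + i) by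
      rw [pow_succ]; omega, Nat.dvd_add_right dvd_rfl]
    exact Nat.not_dvd_of_pos_of_lt (by omega) (by omega)
  · exact fun h => absurd (Finset.self_mem_range_succ _) h

lemma integral_rhoDyadic {E : Type*} [NormedAddCommGroup E] [NormedSpace ℝ E] [CompleteSpace E]
    (f : ℂ → E) (k : ℕ) :
    ∫ z, f z ∂rhoDyadic k = ((2 : ℝ) ^ k)⁻¹ • ∑ j : Fin (2 ^ k), f (dyadicNode k j) := by
  rw [rhoDyadic_eq_sum_dirac, integral_smul_measure, Measure.sum_fintype,
    integral_finsetSum_measure fun j _ => integrable_dirac enorm_lt_top]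
  simp only [integral_dirac, ENNReal.toReal_inv, ENNReal.toReal_pow, ENNReal.toReal_ofNat]

instance (k : ℕ) : IsProbabilityMeasure (rhoDyadic k) where
  measure_univ := by
    simp [rhoDyadic_eq_sum_dirac, ENNReal.inv_mul_cancel]

lemma ae_norm_eq_one_rhoDyadic (k : ℕ) : ∀ᵐ z ∂rhoDyadic k, ‖z‖ = 1 := by
  rw [rhoDyadic_eq_sum_dirac]
  refine Measure.ae_smul_measure (Measure.ae_sum_iff.2 fun j => ?_) _
  exact (ae_dirac_iff (measurableSet_eq_fun (by fun_prop) (by fun_prop))).2 (norm_dyadicNode k j)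

lemma one_le_integral_rhoDyadic {q : ℂ[X]} (hq : q.Monic) (hd : q.natDegree < 2 ^ k) :
    1 ≤ ∫ z, ‖q.eval z‖ ^ 2 ∂rhoDyadic k := by
  have hcard := card_le_sum_norm_sq
    (u := fun j : Fin (2 ^ k) => dyadicNode k j ^ (2 ^ (k + 1) - q.natDegree))
    (g := fun j => q.eval (dyadicNode k j)) (fun j => by rw [norm_pow, norm_dyadicNode, one_pow])
    (by simpa using sum_dyadicNode_pow_mul_eval hq hd)
  rw [integral_rhoDyadic, smul_eq_mul, ← div_eq_inv_mul, one_le_div (by positivity)]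
  simpa using hcard

lemma integral_rhoDyadic_le {f : ℂ → ℝ} {C : ℝ} (hf : ∀ z, ‖z‖ = 1 → f z ≤ C) (k : ℕ) :
    ∫ z, f z ∂rhoDyadic k ≤ C := by
  rw [integral_rhoDyadic, smul_eq_mul, inv_mul_le_iff₀ (by positivity)]
  simpa using Finset.sum_le_card_nsmul Finset.univ (fun j : Fin (2 ^ k) => f (dyadicNode k j)) C
    fun j _ => hf _ (norm_dyadicNode k j)

end Dyadic

section Szego

variable (ρ : Measure ℂ) {n : ℕ}

lemma szegoE2_le_integral {q : ℂ[X]} (hq : q.Monic) (hd : q.natDegree = n) :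
    szegoE2 ρ n ≤ ∫ z, ‖q.eval z‖ ^ 2 ∂ρ :=
  csInf_le ⟨0, by rintro x ⟨p, -, -, rfl⟩; positivity⟩ ⟨q, hq, hd, rfl⟩

lemma le_szegoE2 {c : ℝ} (h : ∀ q : ℂ[X], q.Monic → q.natDegree = n → c ≤ ∫ z, ‖q.eval z‖ ^ 2 ∂ρ) :
    c ≤ szegoE2 ρ n :=
  le_csInf ⟨_, X ^ n, monic_X_pow n, natDegree_X_pow n, rfl⟩ <| by
    rintro x ⟨q, hq, hd, rfl⟩
    exact h q hq hd

end Szego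

lemma hasSum_integral_norm_eval_sq {a : ℕ → ℝ} (ha : ∀ k, 0 ≤ a k) (hs : Summable a) (q : ℂ[X]) :
    HasSum (fun k => a k * ∫ z, ‖q.eval z‖ ^ 2 ∂rhoDyadic k)
      (∫ z, ‖q.eval z‖ ^ 2 ∂Measure.sum fun k => ENNReal.ofReal (a k) • rhoDyadic k) := by
  obtain ⟨C, hC⟩ := (isCompact_sphere (0 : ℂ) 1).exists_bound_of_continuousOn
    (f := fun z => ‖q.eval z‖ ^ 2) (by fun_prop)
  refine hasSum_integral_sum_ofReal_smul ha hs (by fun_prop : Continuous _).stronglyMeasurable C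
    fun k => (ae_norm_eq_one_rhoDyadic k).mono fun z hz => hC z (by simpa using hz)

theorem stmt3 (a : ℕ → ℝ) (ha : ∀ k, 0 ≤ a k) (hsum : ∑' k : ℕ, a k = 1)
    (n : ℕ) :
    (∑' k : ℕ, a (n + 1 + k)) ≤
        szegoE2 (Measure.sum fun k : ℕ =>
          ENNReal.ofReal (a k) • rhoDyadic k) (2 ^ n) ∧
      szegoE2 (Measure.sum fun k : ℕ =>
          ENNReal.ofReal (a k) • rhoDyadic k) (2 ^ n)
        ≤ 4 * ∑' k : ℕ, a (n + k) := by
  have hs : Summable a := by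
    by_contra h
    simp [tsum_eq_zero_of_not_summable h] at hsum
  have hI := fun q => hasSum_integral_norm_eval_sq ha hs q
  constructor
  · refine le_szegoE2 _ fun q hq hd => (hI q).tsum_eq ▸ ?_
    refine tsum_nat_add_le_tsum_mul ha (fun k => integral_nonneg fun z => by positivity)
      (hI q).summable (n + 1) fun k hk => one_le_integral_rhoDyadic hq ?_
    exact hd ▸ Nat.pow_lt_pow_right one_lt_two hk
  · set q := X ^ 2 ^ n - C (1 : ℂ)
    have hq : q.Monic := monic_X_pow_sub_C 1 (by positivity)
    refine (szegoE2_le_integral _ hq natDegree_X_pow_sub_C).trans ?_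
    rw [← (hI q).tsum_eq]
    refine tsum_mul_le_mul_tsum_nat_add ha hs (hI q).summable n (fun k hk => ?_) fun k => ?_
    · simp [q, integral_rhoDyadic, dyadicNode_pow_two_pow hk]
    · refine integral_rhoDyadic_le (fun z hz => ?_) k
      have hq_le : ‖z ^ 2 ^ n - 1‖ ≤ 2 := (norm_sub_le _ _).trans (by simp [hz]; norm_num)
      simpa [q] using (pow_le_pow_left₀ (norm_nonneg _) hq_le 2).trans_eq (by norm_num)
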